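/- arXiv:alg-geom/9612005 — 3 statements merged into one kernel-verified Lean document; each statement's English description precedes it below -/
import Mathlib

section
/- Let R be a commutative ring containing ℚ. For each f ∈ x²/2 + x³·R[[x]] there exists a unique g ∈ x²/2 + x³·R[[x]] such that g ∘ f' + f = x·f', where f' denotes the formal derivative and ∘ is composition of formal power series (well-defined since f' has zero constant term). -/
/-!
If `d = x + O(x²)`, then the coefficient of `xⁿ` in `g ∘ d` is `gₙ` plus a combination of
`g₀, …, gₙ₋₁`, so `g ↦ g ∘ d` is unitriangular and hence bijective. For `d = f'` the equation
reads `g ∘ f' = x f' - f`, and `x f' - f` has coefficients `(n - 1) fₙ`, i.e. `0, 0, 1/2` in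
degrees `0, 1, 2`; by triangularity `g` starts with the same coefficients.
-/

open PowerSeries

/-- Composition `f(g)` of formal power series, intended for `g` with zero constant term. -/
noncomputable def pscomp {R : Type*} [CommRing R] (f g : PowerSeries R) : PowerSeries R :=
  PowerSeries.mk fun n => ∑ k ∈ Finset.range (n + 1), coeff k f * coeff n (g ^ k)

namespace PowerSeries

variable {R : Type*} [CommRing R]

theorem coeff_pow_self_of_constantCoeff_eq_zero {d : R⟦X⟧} (hd0 : constantCoeff d = 0) (n : ℕ) :
    coeff n (d ^ n) = coeff 1 d ^ n := by
  obtain ⟨u, rfl⟩ := X_dvd_iff.mpr hd0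
  rw [mul_pow, coeff_X_pow_mul', if_pos le_rfl, Nat.sub_self, coeff_zero_eq_constantCoeff_apply,
    map_pow, ← coeff_zero_eq_constantCoeff_apply, ← coeff_succ_X_mul]

theorem coeff_X_mul_derivative (f : R⟦X⟧) (n : ℕ) :
    coeff n (X * d⁄dX R f) = n * coeff n f := by
  cases n with
  | zero => simp
  | succ n => rw [coeff_succ_X_mul, coeff_derivative]; push_cast; ring

end PowerSeries

section Composition

variable {R : Type*} [CommRing R] {d : R⟦X⟧}

theorem coeff_pscomp (hd0 : constantCoeff d = 0) (hd1 : coeff 1 d = 1) (g : R⟦X⟧) (n : ℕ) :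
    coeff n (pscomp g d) = ∑ k ∈ Finset.range n, coeff k g * coeff n (d ^ k) + coeff n g := by
  rw [pscomp, coeff_mk, Finset.sum_range_succ, coeff_pow_self_of_constantCoeff_eq_zero hd0, hd1,
    one_pow, mul_one]

theorem coeff_pscomp_of_forall_lt (hd0 : constantCoeff d = 0) (hd1 : coeff 1 d = 1) {g : R⟦X⟧}
    {n : ℕ} (hg : ∀ k < n, coeff k g = 0) : coeff n (pscomp g d) = coeff n g := by
  rw [coeff_pscomp hd0 hd1, add_eq_right]
  exact Finset.sum_eq_zero fun k hk => by rw [hg k (Finset.mem_range.mp hk), zero_mul]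

theorem coeff_pscomp_eq_coeff_of_forall_lt (hd0 : constantCoeff d = 0) (hd1 : coeff 1 d = 1)
    {g : R⟦X⟧} {n : ℕ} (hlow : ∀ k < n, coeff k (pscomp g d) = 0) {m : ℕ} (hm : m ≤ n) :
    coeff m (pscomp g d) = coeff m g := by
  have hg : ∀ k < n, coeff k g = 0 := by
    intro k
    induction k using Nat.strong_induction_on with
    | _ k ih =>
      intro hk
      rw [← coeff_pscomp_of_forall_lt hd0 hd1 fun j hj => ih j hj (hj.trans hk), hlow k hk]
  exact coeff_pscomp_of_forall_lt hd0 hd1 fun k hk => hg k (hk.trans_le hm)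

variable (d) in
noncomputable def pscompInvCoeff (h : R⟦X⟧) (n : ℕ) : R :=
  coeff n h - ∑ k ∈ (Finset.range n).attach, pscompInvCoeff h k * coeff n (d ^ (k : ℕ))
termination_by n
decreasing_by exact Finset.mem_range.mp k.2

theorem pscompInvCoeff_eq (h : R⟦X⟧) (n : ℕ) : pscompInvCoeff d h n =
    coeff n h - ∑ k ∈ Finset.range n, pscompInvCoeff d h k * coeff n (d ^ k) := by
  rw [pscompInvCoeff,
    Finset.sum_attach (Finset.range n) fun k => pscompInvCoeff d h k * coeff n (d ^ k)]

theorem pscomp_mk_pscompInvCoeff (hd0 : constantCoeff d = 0) (hd1 : coeff 1 d = 1) (h : R⟦X⟧) :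
    pscomp (mk (pscompInvCoeff d h)) d = h := by
  ext n
  rw [coeff_pscomp hd0 hd1]
  simp only [coeff_mk]
  rw [pscompInvCoeff_eq]
  ring

theorem pscomp_sub (f g : R⟦X⟧) : pscomp (f - g) d = pscomp f d - pscomp g d := by
  ext n
  simp only [pscomp, coeff_mk, map_sub, sub_mul, Finset.sum_sub_distrib]

theorem eq_zero_of_pscomp_eq_zero (hd0 : constantCoeff d = 0) (hd1 : coeff 1 d = 1) {g : R⟦X⟧}
    (hg : pscomp g d = 0) : g = 0 := by
  ext n
  induction n using Nat.strong_induction_on with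
  | _ n ih => rw [← coeff_pscomp_of_forall_lt hd0 hd1 ih, hg]

theorem pscomp_left_injective (hd0 : constantCoeff d = 0) (hd1 : coeff 1 d = 1) :
    Function.Injective fun g : R⟦X⟧ => pscomp g d := fun f g hfg =>
  sub_eq_zero.mp <| eq_zero_of_pscomp_eq_zero hd0 hd1 <| by
    rw [pscomp_sub]; exact sub_eq_zero.mpr hfg

theorem pscomp_left_bijective (hd0 : constantCoeff d = 0) (hd1 : coeff 1 d = 1) :
    Function.Bijective fun g : R⟦X⟧ => pscomp g d :=
  ⟨pscomp_left_injective hd0 hd1, fun h => ⟨_, pscomp_mk_pscompInvCoeff hd0 hd1 h⟩⟩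

end Composition

/-- Existence and uniqueness of the Legendre transform: for every
`f ∈ x²/2 + x³·R[[x]]` there is a unique `g ∈ x²/2 + x³·R[[x]]` with
`g ∘ f' + f = x·f'`. -/
theorem legendre_exists_unique {R : Type*} [CommRing R] [Algebra ℚ R]
    (f : PowerSeries R) (hf0 : coeff 0 f = 0) (hf1 : coeff 1 f = 0)
    (hf2 : coeff 2 f = algebraMap ℚ R (1 / 2)) :
    ∃! g : PowerSeries R,
      (coeff 0 g = 0 ∧ coeff 1 g = 0 ∧ coeff 2 g = algebraMap ℚ R (1 / 2)) ∧
      pscomp g f.derivativeFun + f = X * f.derivativeFun := by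
  change ∃! g : R⟦X⟧, (coeff 0 g = 0 ∧ coeff 1 g = 0 ∧ coeff 2 g = algebraMap ℚ R (1 / 2)) ∧
    pscomp g (d⁄dX R f) + f = X * d⁄dX R f
  have hd0 : constantCoeff (d⁄dX R f) = 0 := by
    rw [← coeff_zero_eq_constantCoeff_apply, coeff_derivative, hf1, zero_mul]
  have hd1 : coeff 1 (d⁄dX R f) = 1 := by
    rw [coeff_derivative, hf2, Nat.cast_one, one_add_one_eq_two, ← map_ofNat (algebraMap ℚ R) 2,
      ← map_mul]
    norm_num
  have hrhs : ∀ n, coeff n (X * d⁄dX R f - f) = (n - 1) * coeff n f := fun n => by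
    rw [map_sub, coeff_X_mul_derivative]; ring
  obtain ⟨g, hg, hg_unique⟩ := (pscomp_left_bijective hd0 hd1).existsUnique (X * d⁄dX R f - f)
  have hlow : ∀ k < 2, coeff k (pscomp g (d⁄dX R f)) = 0 := by
    intro k hk
    interval_cases k <;> simp [hg, hrhs, hf0]
  have hcoeff := fun m (hm : m ≤ 2) => (coeff_pscomp_eq_coeff_of_forall_lt hd0 hd1 hlow hm).symm
  refine ⟨g, ⟨⟨?_, ?_, ?_⟩, eq_sub_iff_add_eq.mp hg⟩,
    fun g' hg' => hg_unique g' (eq_sub_of_add_eq hg'.2)⟩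
  · rw [hcoeff 0 (by norm_num), hlow 0 (by norm_num)]
  · rw [hcoeff 1 (by norm_num), hlow 1 (by norm_num)]
  · rw [hcoeff 2 (by norm_num), hg, hrhs, hf2]; norm_num
end

section
/- The Legendre transform is an involution: if f, g ∈ x²/2 + x³·R[[x]] satisfy g ∘ f' + f = x·f' (i.e. g = ℒf), then f ∘ g' + g = x·g' (i.e. f = ℒg). -/
/-!
Differentiating `g ∘ f' + f = X f'` gives `(g' ∘ f') f'' = X f''`, and `f''` is a unit because
`f' = X + O(X²)`, so `g' ∘ f' = X`. As `f'` has a compositional inverse, `g'` is that inverse,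
hence `f' ∘ g' = X`. Composing the defining identity with `g'` then yields `g + f ∘ g' = g' X`.
-/

open PowerSeries

namespace PowerSeries

variable {R : Type*} [CommRing R]

theorem coeff_pow_eq_zero_of_lt {g : R⟦X⟧} (hg : constantCoeff g = 0) {n k : ℕ} (h : n < k) :
    coeff n (g ^ k) = 0 :=
  X_pow_dvd_iff.mp (pow_dvd_pow_of_dvd (X_dvd_iff.mpr hg) k) n h

theorem pscomp_eq_subst (f : R⟦X⟧) {g : R⟦X⟧} (hg : constantCoeff g = 0) :
    pscomp f g = f.subst g := by
  ext n
  rw [pscomp, coeff_mk, coeff_subst' (HasSubst.of_constantCoeff_zero' hg),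
    finsum_eq_sum_of_support_subset _ (s := Finset.range (n + 1))]
  · rfl
  · intro k hk
    rw [Function.mem_support] at hk
    rw [Finset.coe_range, Set.mem_Iio]
    by_contra! hnk
    exact hk (by rw [coeff_pow_eq_zero_of_lt hg (by omega), smul_zero])

theorem subst_eq_X_symm {a b : R⟦X⟧} (hb0 : constantCoeff b = 0) (hb1 : IsUnit (coeff 1 b))
    (h : a.subst b = X) : b.subst a = X := by
  have hb : HasSubst b := .of_constantCoeff_zero' hb0
  have hr : HasSubst (b.substInvOfIsUnit hb1) := .substInvOfIsUnit b hb1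
  have hbr : b.subst (b.substInvOfIsUnit hb1) = X := subst_substInvOfIsUnit_right b hb0 hb1
  -- the left inverse `a` of `b` agrees with its right inverse
  have hra : b.substInvOfIsUnit hb1 = a := by
    simpa only [hbr, X_subst, h, subst_X hr] using subst_comp_subst_apply hb hr a
  rw [← hra, hbr]

def IsLegendreTransform (f g : R⟦X⟧) : Prop :=
  g.subst (d⁄dX R f) + f = X * d⁄dX R f

theorem IsLegendreTransform.derivative_subst_derivative {f g : R⟦X⟧}
    (h : IsLegendreTransform f g) (hf0 : constantCoeff (d⁄dX R f) = 0)
    (hf1 : IsUnit (coeff 1 (d⁄dX R f))) :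
    (d⁄dX R g).subst (d⁄dX R f) = X := by
  have hunit : IsUnit (d⁄dX R (d⁄dX R f)) := by
    rw [isUnit_iff_constantCoeff, ← coeff_zero_eq_constantCoeff_apply, coeff_derivative]
    simpa using hf1
  have hd := congrArg (d⁄dX R) h
  rw [map_add, derivative_subst (.of_constantCoeff_zero' hf0), Derivation.leibniz,
    derivative_X, smul_eq_mul, smul_eq_mul, mul_one] at hd
  exact hunit.mul_left_injective (by linear_combination hd)

theorem IsLegendreTransform.symm {f g : R⟦X⟧} (h : IsLegendreTransform f g)
    (hf0 : constantCoeff (d⁄dX R f) = 0) (hf1 : IsUnit (coeff 1 (d⁄dX R f)))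
    (hg0 : constantCoeff (d⁄dX R g) = 0) : IsLegendreTransform g f := by
  have hfg : (d⁄dX R f).subst (d⁄dX R g) = X :=
    subst_eq_X_symm hf0 hf1 (h.derivative_subst_derivative hf0 hf1)
  have hg : HasSubst (d⁄dX R g) := .of_constantCoeff_zero' hg0
  have h' := congrArg (subst (d⁄dX R g)) h
  rw [subst_add hg, subst_comp_subst_apply (.of_constantCoeff_zero' hf0) hg, hfg, X_subst,
    subst_mul hg, subst_X hg, hfg] at h'
  rw [IsLegendreTransform, add_comm, h', mul_comm]

end PowerSeries

theorem legendre_involution_general {R : Type*} [CommRing R] [Algebra ℚ R]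
    (f g : PowerSeries R)
    (hf1 : coeff 1 f = 0)
    (hf2 : coeff 2 f = algebraMap ℚ R (1 / 2))
    (hg1 : coeff 1 g = 0)
    (h : pscomp g f.derivativeFun + f = X * f.derivativeFun) :
    pscomp f g.derivativeFun + g = X * g.derivativeFun := by
  have hf'0 : constantCoeff (d⁄dX R f) = 0 := by
    rw [← coeff_zero_eq_constantCoeff_apply, coeff_derivative, hf1, zero_mul]
  have hg'0 : constantCoeff (d⁄dX R g) = 0 := by
    rw [← coeff_zero_eq_constantCoeff_apply, coeff_derivative, hg1, zero_mul]
  have hf'1 : coeff 1 (d⁄dX R f) = 1 := by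
    rw [coeff_derivative, hf2, Nat.cast_one, one_add_one_eq_two, ← map_ofNat (algebraMap ℚ R) 2,
      ← map_mul]
    norm_num
  have hfg : IsLegendreTransform f g := by
    rwa [IsLegendreTransform, ← pscomp_eq_subst _ hf'0]
  have hgf := hfg.symm hf'0 (hf'1 ▸ isUnit_one) hg'0
  rwa [IsLegendreTransform, ← pscomp_eq_subst _ hg'0] at hgf

/-- The Legendre transform is an involution: if `f, g ∈ x²/2 + x³·R[[x]]` satisfy
`g ∘ f' + f = x·f'` (i.e. `g = ℒf`), then `f ∘ g' + g = x·g'` (i.e. `f = ℒg`). -/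
theorem legendre_involution {R : Type*} [CommRing R] [Algebra ℚ R]
    (f g : PowerSeries R)
    (hf0 : coeff 0 f = 0) (hf1 : coeff 1 f = 0)
    (hf2 : coeff 2 f = algebraMap ℚ R (1 / 2))
    (hg0 : coeff 0 g = 0) (hg1 : coeff 1 g = 0)
    (hg2 : coeff 2 g = algebraMap ℚ R (1 / 2))
    (h : pscomp g f.derivativeFun + f = X * f.derivativeFun) :
    pscomp f g.derivativeFun + g = X * g.derivativeFun :=
  legendre_involution_general f g hf1 hf2 hg1 h
end

section
/- With a₀ = ∑_{n≥3} v_{0,n} xⁿ/n! and b₀ defined by x²/2 + b₀ = ℒ(x²/2 - a₀), the coefficient of x⁵/5! in b₀ equals v_{0,5} + 10·v_{0,4}·v_{0,3} + 15·v_{0,3}³. -/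
open PowerSeries

/-- The coefficient ring: polynomials over `ℚ` in the variables `v_{0,n}`, `n ≥ 3`,
where the variable `v_{0,n}` is `MvPolynomial.X n`. -/
noncomputable abbrev VRing : Type := MvPolynomial ℕ ℚ

/-- The generating function `a₀ = ∑_{n≥3} v_{0,n}·xⁿ/n!`. -/
noncomputable def aZero : PowerSeries VRing :=
  PowerSeries.mk fun n =>
    if 3 ≤ n then MvPolynomial.C ((n.factorial : ℚ)⁻¹) * MvPolynomial.X n else 0

/-- `x²/2` as a power series over `VRing`. -/
noncomputable def halfXSq : PowerSeries VRing :=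
  PowerSeries.C (R := VRing) (MvPolynomial.C (1 / 2 : ℚ)) * X ^ 2

/-!
Write `F = f'`, so `F = x + O(x²)` when `f₁ = 0` and `2 f₂ = 1`. The coefficient of `xⁿ` in
`g(F) + f = x F` reads `∑_{k ≤ n} g_k [xⁿ] Fᵏ = (n - 1) f_n`, a triangular system for the `g_k` whose
diagonal entries `[xᵏ] Fᵏ` are `1`. Solving it up to `n = 5` gives
`g₅ = -f₅ + 12 f₄ f₃ - 27 f₃³` over any commutative ring; for `f = x²/2 - a₀` one has
`f_n = -v_{0,n}/n!` for `n ≥ 3`.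
-/

section
variable {R : Type*} [CommRing R] {f g : R⟦X⟧}

theorem sum_coeff_mul_coeff_pow_of_legendre (h : pscomp g (d⁄dX R f) + f = X * d⁄dX R f)
    (n : ℕ) :
    ∑ k ∈ Finset.range (n + 2), coeff k g * coeff (n + 1) (d⁄dX R f ^ k) = n * coeff (n + 1) f := by
  have := congrArg (coeff (n + 1)) h
  simp only [pscomp, map_add, coeff_mk, coeff_succ_X_mul, coeff_derivative] at this
  linear_combination this

theorem coeff_five_of_legendre (hf1 : coeff 1 f = 0) (hf2 : 2 * coeff 2 f = 1)
    (h : pscomp g (d⁄dX R f) + f = X * d⁄dX R f) :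
    coeff 5 g = -coeff 5 f + 12 * coeff 4 f * coeff 3 f - 27 * coeff 3 f ^ 3 := by
  have e := sum_coeff_mul_coeff_pow_of_legendre h
  have hc (n : ℕ) : coeff n (d⁄dX R f) = coeff (n + 1) f * (n + 1) := coeff_derivative f n
  generalize d⁄dX R f = F at e hc
  have hF0 : coeff 0 F = 0 := by simp [hc, hf1]
  have hF1 : coeff 1 F = 1 := by rw [hc]; linear_combination hf2
  have e1 := e 0
  have e2 := e 1
  have e3 := e 2
  have e4 := e 3
  have e5 := e 4
  simp only [zero_add, Finset.sum_range_succ, Finset.range_one, Finset.sum_singleton,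
    coeff_zero_eq_constantCoeff, pow_zero, coeff_one, one_ne_zero, ↓reduceIte, mul_zero, pow_succ,
    one_mul, hF1, mul_one, Nat.cast_zero, zero_mul, Nat.reduceAdd, OfNat.ofNat_ne_zero, coeff_mul,
    Finset.Nat.sum_antidiagonal_eq_sum_range_succ_mk, Nat.succ_eq_add_one, hF0, tsub_zero,
    Nat.add_one_sub_one, tsub_self, add_zero, Nat.cast_one, Nat.reduceSub, Finset.range_zero,
    zero_tsub, Finset.sum_const_zero, Nat.cast_ofNat] at e1 e2 e3 e4 e5
  simp only [hc, Nat.cast_ofNat, Nat.reduceAdd] at e1 e2 e3 e4 e5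
  rw [e1] at e2 e3 e4 e5
  have hg2 : coeff 2 g = coeff 2 f := by linear_combination e2
  rw [hg2] at e3 e4 e5
  have hg3 : coeff 3 g = -coeff 3 f := by linear_combination e3 - 3 * coeff 3 f * hf2
  rw [hg3] at e4 e5
  have hg4 : coeff 4 g = -coeff 4 f + 9 * coeff 2 f * coeff 3 f ^ 2 := by
    linear_combination e4 - (4 * coeff 4 f + 9 * coeff 3 f ^ 2) * hf2
  rw [hg4] at e5
  linear_combination e5 - (5 * coeff 5 f + 12 * coeff 4 f * coeff 3 f + 54 * coeff 3 f ^ 3) * hf2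

end

theorem coeff_halfXSq_sub_aZero {n : ℕ} (hn : 3 ≤ n) :
    coeff n (halfXSq - aZero) = -(MvPolynomial.C (n.factorial : ℚ)⁻¹ * MvPolynomial.X n) := by
  simp [halfXSq, aZero, coeff_X_pow, hn, show n ≠ 2 by omega]

/-- If `x²/2 + b₀` is the Legendre transform of `x²/2 - a₀`, then the coefficient
`Mv_{0,5}` of `x⁵/5!` in `b₀` equals `v_{0,5} + 10·v_{0,4}·v_{0,3} + 15·v_{0,3}³`. -/
theorem genus0_coeff_five (b₀ : PowerSeries VRing)
    (h : pscomp (halfXSq + b₀) (halfXSq - aZero).derivativeFun + (halfXSq - aZero)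
        = X * (halfXSq - aZero).derivativeFun) :
    (120 : VRing) * coeff 5 b₀ =
      MvPolynomial.X 5 + 10 * (MvPolynomial.X 4 * MvPolynomial.X 3)
        + 15 * MvPolynomial.X 3 ^ 3 := by
  have hf1 : coeff 1 (halfXSq - aZero) = 0 := by simp [halfXSq, aZero, coeff_X_pow]
  have hf2 : 2 * coeff 2 (halfXSq - aZero) = 1 := by
    simp [halfXSq, aZero, coeff_X_pow, ← map_ofNat MvPolynomial.C 2, ← map_mul]
  have hg5 : coeff 5 (halfXSq + b₀) = coeff 5 b₀ := by simp [halfXSq, coeff_X_pow]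
  have key := coeff_five_of_legendre hf1 hf2 h
  simp only [hg5, coeff_halfXSq_sub_aZero, Nat.reduceLeDiff] at key
  rw [key]
  apply MvPolynomial.funext
  intro x
  simp only [map_mul, map_sub, map_add, map_neg, map_pow, MvPolynomial.eval_ofNat,
    MvPolynomial.eval_C, MvPolynomial.eval_X]
  norm_num [Nat.factorial]
  ring
end
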